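/- Let n, d ≥ 1, let F be a unitary matrix on ℂ^{2^n} ⊗ ℂ^d (a matrix indexed by pairs (system index, environment index)), and let e ∈ ℂ^d be a unit vector. Define the channel Λ on 2^n × 2^n matrices by Λ(ρ) := Tr_E[ F · (ρ ⊗ e·e†) · F† ], where Tr_E is the partial trace over the environment: (Tr_E M)(x, y) = ∑_{a ∈ Fin d} M((x,a), (y,a)). Then the Pauli twirl of Λ is a Pauli channel: there exists c : (Fin n → Fin 4) → ℝ with c(g) ≥ 0 for all g and ∑_g c(g) = 1 such that for every 2^n × 2^n complex matrix ρ, (1/4^n) ∑_{f} P_f · Λ(P_f · ρ · P_f) · P_f = ∑_g c(g) • (P_g · ρ · P_g). (The core of Lemma 1: averaging over the quantum one-time pad reduces arbitrary noise, given by a unitary dilation on system plus environment, to a probabilistic mixture of Pauli errors.) -/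

import Mathlib

open Matrix Kronecker

/-- The four single-qubit Pauli matrices I, X, Y, Z. -/
noncomputable def pauli : Fin 4 → Matrix (Fin 2) (Fin 2) ℂ :=
  ![!![1, 0; 0, 1], !![0, 1; 1, 0], !![0, -Complex.I; Complex.I, 0], !![1, 0; 0, -1]]

/-- The `n`-qubit Pauli string `⊗ᵢ σ_{f i}`. -/
noncomputable def PauliString (n : ℕ) (f : Fin n → Fin 4) :
    Matrix (Fin n → Fin 2) (Fin n → Fin 2) ℂ :=
  Matrix.of fun x y => ∏ i, pauli (f i) (x i) (y i)

/-- Partial trace over the environment `Fin d`. -/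
noncomputable def trEnv (n d : ℕ)
    (M : Matrix ((Fin n → Fin 2) × Fin d) ((Fin n → Fin 2) × Fin d) ℂ) :
    Matrix (Fin n → Fin 2) (Fin n → Fin 2) ℂ :=
  Matrix.of fun x y => ∑ a : Fin d, M (x, a) (y, a)

/-- The noise channel `Λ(ρ) = Tr_E[F (ρ ⊗ e e†) F†]` given by a unitary dilation `F`
on system plus environment with environment state `e`. -/
noncomputable def noiseChannel (n d : ℕ)
    (F : Matrix ((Fin n → Fin 2) × Fin d) ((Fin n → Fin 2) × Fin d) ℂ)
    (e : Fin d → ℂ) (ρ : Matrix (Fin n → Fin 2) (Fin n → Fin 2) ℂ) :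
    Matrix (Fin n → Fin 2) (Fin n → Fin 2) ℂ :=
  trEnv n d (F * (ρ ⊗ₖ Matrix.vecMulVec e (star e)) * Fᴴ)

/-!
Write the channel in Kraus form `Λ ρ = ∑ₐ Kₐ ρ Kₐᴴ` and expand each `Kₐ = ∑_g λ_{a g} P_g` in
the Pauli basis. Conjugation by `P_f` multiplies `P_g` by a sign `s(f, g) = ±1`, and these signs
are orthogonal characters, `∑_f s(f, g) s(f, h) = 4ⁿ δ_{g h}`; so the twirl kills every cross term
`P_g ρ P_h` with `g ≠ h` and leaves `∑_g c_g P_g ρ P_g` with `c_g = ∑ₐ |λ_{a g}|² ≥ 0`.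
The twirl of a trace-preserving map is trace-preserving, and `ρ = 1` then gives `∑_g c_g = 1`.
-/

namespace Matrix

variable {ι m n p R : Type*} [Fintype ι]

def kroneckerPi [CommSemiring R] (M : ι → Matrix m n R) : Matrix (ι → m) (ι → n) R :=
  of fun x y => ∏ i, M i (x i) (y i)

theorem kroneckerPi_mul [DecidableEq ι] [CommSemiring R] [Fintype n] (M : ι → Matrix m n R)
    (N : ι → Matrix n p R) :
    kroneckerPi M * kroneckerPi N = kroneckerPi fun i => M i * N i := by
  ext x y
  simp only [kroneckerPi, mul_apply, of_apply, ← Finset.prod_mul_distrib]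
  exact (Fintype.prod_sum fun i c => M i (x i) c * N i c (y i)).symm

theorem kroneckerPi_smul [CommSemiring R] (c : ι → R) (M : ι → Matrix m n R) :
    kroneckerPi (fun i => c i • M i) = (∏ i, c i) • kroneckerPi M := by
  ext x y
  simp [kroneckerPi, Finset.prod_mul_distrib]

theorem kroneckerPi_one [CommSemiring R] [DecidableEq m] :
    kroneckerPi (fun _ : ι => (1 : Matrix m m R)) = 1 := by
  ext x y
  simp [kroneckerPi, one_apply, Fintype.prod_boole, funext_iff]

theorem conjTranspose_kroneckerPi [CommSemiring R] [StarRing R] (M : ι → Matrix m n R) :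
    (kroneckerPi M)ᴴ = kroneckerPi fun i => (M i)ᴴ := by
  ext x y
  simp [kroneckerPi, star_prod]

theorem trace_kroneckerPi [DecidableEq ι] [CommSemiring R] [Fintype m] (M : ι → Matrix m m R) :
    (kroneckerPi M).trace = ∏ i, (M i).trace := by
  simp only [trace, diag, kroneckerPi, of_apply]
  exact (Fintype.prod_sum fun i c => M i c c).symm

end Matrix

-- `σ_a` and `σ_b` anticommute unless one of them is the identity or they are equal.
def pauliSign (a b : Fin 4) : ℂ := if a = 0 ∨ b = 0 ∨ a = b then 1 else -1

theorem pauli_mul_pauli_mul_pauli (a b : Fin 4) :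
    pauli a * pauli b * pauli a = pauliSign a b • pauli b := by
  fin_cases a <;> fin_cases b <;>
    · ext i j
      fin_cases i <;> fin_cases j <;>
        simp [pauli, pauliSign, mul_apply, Fin.sum_univ_two]

theorem pauli_mul_self (a : Fin 4) : pauli a * pauli a = 1 := by
  fin_cases a <;>
    · ext i j
      fin_cases i <;> fin_cases j <;> simp [pauli, mul_apply, Fin.sum_univ_two]

theorem conjTranspose_pauli (a : Fin 4) : (pauli a)ᴴ = pauli a := by
  fin_cases a <;>
    · ext i j
      fin_cases i <;> fin_cases j <;> simp [pauli, conjTranspose_apply]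

theorem trace_pauli_mul (a b : Fin 4) : (pauli a * pauli b).trace = if a = b then 2 else 0 := by
  fin_cases a <;> fin_cases b <;>
    simp [pauli, trace, Fin.sum_univ_two] <;> norm_num

theorem sum_pauliSign_mul (b c : Fin 4) :
    ∑ a, pauliSign a b * pauliSign a c = if b = c then 4 else 0 := by
  fin_cases b <;> fin_cases c <;> simp [pauliSign, Fin.sum_univ_four] <;> norm_num

local notation "𝕄[" n "]" => Matrix (Fin n → Fin 2) (Fin n → Fin 2) ℂ

def pauliStringSign (n : ℕ) (f g : Fin n → Fin 4) : ℂ := ∏ i, pauliSign (f i) (g i)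

theorem PauliString_eq_kroneckerPi (n : ℕ) (f : Fin n → Fin 4) :
    PauliString n f = kroneckerPi fun i => pauli (f i) := rfl

theorem PauliString_mul_self (n : ℕ) (f : Fin n → Fin 4) :
    PauliString n f * PauliString n f = 1 := by
  simp only [PauliString_eq_kroneckerPi, kroneckerPi_mul, pauli_mul_self, kroneckerPi_one]

theorem PauliString_mul_PauliString_mul_PauliString (n : ℕ) (f g : Fin n → Fin 4) :
    PauliString n f * PauliString n g * PauliString n f
      = pauliStringSign n f g • PauliString n g := by
  simp only [PauliString_eq_kroneckerPi, kroneckerPi_mul, pauli_mul_pauli_mul_pauli,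
    kroneckerPi_smul, pauliStringSign]

theorem conjTranspose_PauliString (n : ℕ) (f : Fin n → Fin 4) :
    (PauliString n f)ᴴ = PauliString n f := by
  simp only [PauliString_eq_kroneckerPi, conjTranspose_kroneckerPi, conjTranspose_pauli]

theorem trace_PauliString_mul (n : ℕ) (f g : Fin n → Fin 4) :
    (PauliString n f * PauliString n g).trace = if f = g then 2 ^ n else 0 := by
  simp only [PauliString_eq_kroneckerPi, kroneckerPi_mul, trace_kroneckerPi, trace_pauli_mul]
  split_ifs with hfg
  · simp [hfg]
  · obtain ⟨i, hi⟩ := Function.ne_iff.mp hfg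
    exact Finset.prod_eq_zero (Finset.mem_univ i) (if_neg hi)

theorem sum_pauliStringSign_mul (n : ℕ) (g h : Fin n → Fin 4) :
    ∑ f, pauliStringSign n f g * pauliStringSign n f h = if g = h then 4 ^ n else 0 := by
  simp only [pauliStringSign, ← Finset.prod_mul_distrib]
  rw [← Fintype.prod_sum fun i a => pauliSign a (g i) * pauliSign a (h i)]
  simp only [sum_pauliSign_mul]
  split_ifs with hgh
  · simp [hgh]
  · obtain ⟨i, hi⟩ := Function.ne_iff.mp hgh
    exact Finset.prod_eq_zero (Finset.mem_univ i) (if_neg hi)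

theorem trace_PauliString_mul_mul_PauliString (n : ℕ) (f : Fin n → Fin 4)
    (ρ : 𝕄[n]) :
    (PauliString n f * ρ * PauliString n f).trace = ρ.trace := by
  rw [trace_mul_cycle, PauliString_mul_self, Matrix.one_mul]

theorem linearIndependent_PauliString (n : ℕ) : LinearIndependent ℂ (PauliString n) := by
  rw [Fintype.linearIndependent_iff]
  intro c hc g
  have h := congrArg (fun M => (M * PauliString n g).trace) hc
  simp only [Finset.sum_mul, smul_mul, trace_sum, trace_smul, trace_PauliString_mul, zero_mul,
    trace_zero, smul_eq_mul, mul_ite, mul_zero, Finset.sum_ite_eq', Finset.mem_univ,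
    if_true] at h
  exact (mul_eq_zero.mp h).resolve_right (pow_ne_zero _ two_ne_zero)

noncomputable def pauliBasis (n : ℕ) : Module.Basis (Fin n → Fin 4) ℂ 𝕄[n] :=
  basisOfLinearIndependentOfCardEqFinrank (linearIndependent_PauliString n) <| by
    simp [Module.finrank_matrix, ← mul_pow]

theorem pauliBasis_apply (n : ℕ) (g : Fin n → Fin 4) : pauliBasis n g = PauliString n g := by
  rw [pauliBasis, coe_basisOfLinearIndependentOfCardEqFinrank]

noncomputable def pauliTwirl (n : ℕ) (Φ : 𝕄[n] → 𝕄[n]) (ρ : 𝕄[n]) : 𝕄[n] :=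
  (1 / 4 ^ n : ℂ) • ∑ f, PauliString n f * Φ (PauliString n f * ρ * PauliString n f) *
    PauliString n f

theorem sum_PauliString_conj_mul_mul (n : ℕ) (g h : Fin n → Fin 4) (ρ : 𝕄[n]) :
    ∑ f, PauliString n f * PauliString n g * PauliString n f * ρ *
        (PauliString n f * PauliString n h * PauliString n f)
      = if g = h then (4 ^ n : ℂ) • (PauliString n g * ρ * PauliString n g) else 0 := by
  simp only [PauliString_mul_PauliString_mul_PauliString, Matrix.smul_mul, Matrix.mul_smul,
    smul_smul, ← Finset.sum_smul]
  simp_rw [mul_comm (pauliStringSign n _ h), sum_pauliStringSign_mul]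
  split_ifs with hgh
  · rw [hgh]
  · exact zero_smul _ _

theorem sum_PauliString_conj_mul_mul_sum (n : ℕ) (a b : (Fin n → Fin 4) → ℂ) (ρ : 𝕄[n]) :
    ∑ f, PauliString n f * (∑ g, a g • PauliString n g) * PauliString n f * ρ *
        (PauliString n f * (∑ h, b h • PauliString n h) * PauliString n f)
      = (4 ^ n : ℂ) • ∑ g, (a g * b g) • (PauliString n g * ρ * PauliString n g) := by
  simp only [Finset.mul_sum, Finset.sum_mul, Matrix.mul_smul, Matrix.smul_mul, smul_smul]
  rw [Finset.sum_comm]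
  refine (Finset.sum_congr rfl fun h _ => Finset.sum_comm).trans ?_
  simp_rw [← Finset.smul_sum, sum_PauliString_conj_mul_mul, smul_ite, smul_zero,
    Finset.sum_ite_eq', Finset.mem_univ, if_true, Finset.smul_sum, smul_comm (4 ^ n : ℂ),
    mul_comm (b _)]

theorem pauliTwirl_kraus {α : Type*} [Fintype α] (n : ℕ) (K : α → 𝕄[n]) (ρ : 𝕄[n]) :
    pauliTwirl n (fun σ => ∑ a, K a * σ * (K a)ᴴ) ρ
      = ∑ g, ((∑ a, Complex.normSq ((pauliBasis n).repr (K a) g) : ℝ) : ℂ) •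
          (PauliString n g * ρ * PauliString n g) := by
  set coeff := fun a => (pauliBasis n).repr (K a)
  have hK : ∀ a, K a = ∑ g, coeff a g • PauliString n g := fun a => by
    simpa only [pauliBasis_apply] using ((pauliBasis n).sum_repr (K a)).symm
  have hKH : ∀ a, (K a)ᴴ = ∑ g, star (coeff a g) • PauliString n g := fun a => by
    conv_lhs => rw [hK a]
    simp only [conjTranspose_sum, conjTranspose_smul, conjTranspose_PauliString]
  have hconj : ∀ f, PauliString n f * (∑ a, K a * (PauliString n f * ρ * PauliString n f) *
      (K a)ᴴ) * PauliString n f = ∑ a, PauliString n f * K a * PauliString n f * ρ *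
        (PauliString n f * (K a)ᴴ * PauliString n f) := fun f => by
    simp only [Finset.mul_sum, Finset.sum_mul, Matrix.mul_assoc]
  have hterm : ∀ a, ∑ f, PauliString n f * K a * PauliString n f * ρ *
      (PauliString n f * (K a)ᴴ * PauliString n f)
        = (4 ^ n : ℂ) • ∑ g, (Complex.normSq (coeff a g) : ℂ) •
            (PauliString n g * ρ * PauliString n g) := fun a => by
    rw [hKH a, hK a, sum_PauliString_conj_mul_mul_sum]
    simp only [Complex.star_def, Complex.mul_conj]
  simp only [pauliTwirl, hconj]
  rw [Finset.sum_comm, Finset.sum_congr rfl fun a _ => hterm a, ← Finset.smul_sum, smul_smul,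
    one_div_mul_cancel (pow_ne_zero _ (by norm_num : (4 : ℂ) ≠ 0)), one_smul, Finset.sum_comm]
  push_cast [Finset.sum_smul]
  rfl

theorem trace_pauliTwirl (n : ℕ) {Φ : 𝕄[n] → 𝕄[n]} (hΦ : ∀ σ, (Φ σ).trace = σ.trace)
    (ρ : 𝕄[n]) : (pauliTwirl n Φ ρ).trace = ρ.trace := by
  simp [pauliTwirl, trace_sum, trace_PauliString_mul_mul_PauliString, hΦ]

theorem sum_eq_one_of_pauliTwirl_eq (n : ℕ) {Φ : 𝕄[n] → 𝕄[n]}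
    (hΦ : ∀ σ, (Φ σ).trace = σ.trace) (c : (Fin n → Fin 4) → ℂ)
    (hc : ∀ ρ, pauliTwirl n Φ ρ = ∑ g, c g • (PauliString n g * ρ * PauliString n g)) :
    ∑ g, c g = 1 := by
  have h := congrArg trace (hc 1)
  rw [trace_pauliTwirl n hΦ, trace_sum] at h
  simp only [trace_smul, trace_PauliString_mul_mul_PauliString, smul_eq_mul,
    ← Finset.sum_mul] at h
  have : (1 : 𝕄[n]).trace ≠ 0 := by simp
  exact mul_right_cancel₀ this (h.symm.trans (one_mul _).symm)

-- `krausOp F e a = (1 ⊗ ⟨a|) F (1 ⊗ |e⟩)`.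
noncomputable def krausOp {m d : Type*} [Fintype d] (F : Matrix (m × d) (m × d) ℂ) (e : d → ℂ)
    (a : d) : Matrix m m ℂ :=
  of fun x y => ∑ b, F (x, a) (y, b) * e b

theorem noiseChannel_eq_sum_krausOp (n d : ℕ)
    (F : Matrix ((Fin n → Fin 2) × Fin d) ((Fin n → Fin 2) × Fin d) ℂ) (e : Fin d → ℂ)
    (ρ : 𝕄[n]) :
    noiseChannel n d F e ρ = ∑ a, krausOp F e a * ρ * (krausOp F e a)ᴴ := by
  ext x y
  simp only [noiseChannel, trEnv, krausOp, of_apply, Matrix.sum_apply, mul_apply,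
    conjTranspose_apply, kroneckerMap_apply, vecMulVec_apply, Pi.star_apply,
    Fintype.sum_prod_type, star_sum, star_mul', Finset.sum_mul, Finset.mul_sum]
  congr! 5
  ring

theorem trace_trEnv (n d : ℕ)
    (M : Matrix ((Fin n → Fin 2) × Fin d) ((Fin n → Fin 2) × Fin d) ℂ) :
    (trEnv n d M).trace = M.trace := by
  rw [trace, trace, Fintype.sum_prod_type]
  rfl

theorem trace_noiseChannel (n d : ℕ)
    {F : Matrix ((Fin n → Fin 2) × Fin d) ((Fin n → Fin 2) × Fin d) ℂ}
    (hF : F ∈ unitaryGroup ((Fin n → Fin 2) × Fin d) ℂ) {e : Fin d → ℂ} (he : star e ⬝ᵥ e = 1)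
    (ρ : 𝕄[n]) : (noiseChannel n d F e ρ).trace = ρ.trace := by
  rw [noiseChannel, trace_trEnv, trace_mul_cycle, ← star_eq_conjTranspose,
    mem_unitaryGroup_iff'.mp hF, Matrix.one_mul, trace_kronecker, trace_vecMulVec, dotProduct_comm,
    he, mul_one]

theorem pauli_twirl_of_dilated_channel (n d : ℕ)
    (F : Matrix ((Fin n → Fin 2) × Fin d) ((Fin n → Fin 2) × Fin d) ℂ)
    (hF : F ∈ Matrix.unitaryGroup ((Fin n → Fin 2) × Fin d) ℂ)
    (e : Fin d → ℂ) (he : dotProduct (star e) e = 1) :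
    ∃ c : (Fin n → Fin 4) → ℝ,
      (∀ g, 0 ≤ c g) ∧ (∑ g, c g = 1) ∧
        ∀ ρ : Matrix (Fin n → Fin 2) (Fin n → Fin 2) ℂ,
          (1 / 4 ^ n : ℂ) • ∑ f : Fin n → Fin 4,
              PauliString n f *
                noiseChannel n d F e (PauliString n f * ρ * PauliString n f) *
                PauliString n f
            = ∑ g : Fin n → Fin 4,
                (c g : ℂ) • (PauliString n g * ρ * PauliString n g) := by
  set c := fun g => ∑ a, Complex.normSq ((pauliBasis n).repr (krausOp F e a) g)
  have htwirl : ∀ ρ, pauliTwirl n (noiseChannel n d F e) ρ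
      = ∑ g, (c g : ℂ) • (PauliString n g * ρ * PauliString n g) := by
    simp only [funext (noiseChannel_eq_sum_krausOp n d F e)]
    exact pauliTwirl_kraus n (krausOp F e)
  refine ⟨c, fun g => Finset.sum_nonneg fun a _ => Complex.normSq_nonneg _, ?_, htwirl⟩
  exact_mod_cast sum_eq_one_of_pauliTwirl_eq n (trace_noiseChannel n d hF he) _ htwirl
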